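/- Let g_1, …, g_n ∈ F_{q^m} be linearly independent over F_q, let f be a q-linearized polynomial over F_{q^m} of q-degree less than k, set c_i = f(g_i) for i = 1,…,n, and let r_1, …, r_n ∈ F_{q^m}. For an integer t ≥ 0, the F_q-dimension of the F_q-span of c_1 − r_1, …, c_n − r_n equals t if and only if there exists exactly one monic q-linearized polynomial D over F_{q^m} of q-degree t such that D(r_i) = D(c_i) for all i = 1, …, n. -/

import Mathlib

/-!
A `q`-linearized polynomial evaluates as an `L`-linear combination of the `𝔽_q`-linear maps
`x ↦ x ^ q ^ j`, so it is `𝔽_q`-linear and `D(rᵢ) = D(cᵢ)` for all `i` says exactly that `D`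
vanishes on the error span `V`. A nonzero polynomial vanishing on `V` has degree at least
`|V| = q ^ dim V`; hence monic linearized annihilators of `V` have `q`-degree at least `dim V`,
and at `q`-degree `dim V` they are unique, their difference having too small a degree. One
exists, built along a basis by the recursion `D ↦ D ^ q - D(b) ^ (q - 1) D`: an annihilator `D`
of `W` maps `F ∙ b + W` into `F ∙ D(b)`, on which `X ^ q - D(b) ^ (q - 1) X` vanishes. At
`q`-degree `dim V + k + 1` uniqueness fails, as `D ^ q ^ (k + 1)` and `D ^ q ^ (k + 1) - D`
both qualify.
-/

open Polynomial

/-- `f` is a `q`-linearized polynomial: every monomial with nonzero coefficient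
has exponent a power of `q`, i.e. `f = Σ aᵢ X^(q^i)`. -/
def IsqLinearized (q : ℕ) {L : Type*} [Field L] (f : L[X]) : Prop :=
  ∀ i : ℕ, f.coeff i ≠ 0 → ∃ j : ℕ, i = q ^ j

open Module Submodule

noncomputable def linearizedPolynomials (q : ℕ) (L : Type*) [Field L] : Submodule L L[X] :=
  span L (Set.range fun j : ℕ => (X : L[X]) ^ q ^ j)

section Linearized

variable {L : Type*} [Field L]

theorem isqLinearized_iff_mem_linearizedPolynomials {q : ℕ} {f : L[X]} :
    IsqLinearized q f ↔ f ∈ linearizedPolynomials q L := by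
  constructor
  · intro hf
    rw [f.as_sum_support]
    refine sum_mem fun i hi => ?_
    obtain ⟨j, rfl⟩ := hf i (mem_support_iff.mp hi)
    rw [← smul_X_eq_monomial]
    exact smul_mem _ _ (subset_span ⟨j, rfl⟩)
  · intro hf
    induction hf using span_induction with
    | mem g hg =>
      obtain ⟨j, rfl⟩ := hg
      exact fun i hi => ⟨j, by simpa [coeff_X_pow] using hi⟩
    | zero => simp [IsqLinearized]
    | add g h _ _ hg hh =>
      intro i hi
      by_cases hgi : g.coeff i = 0
      · exact hh i (by simpa [hgi] using hi)
      · exact hg i hgi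
    | smul a g _ hg => exact fun i hi => hg i (by simp_all)

theorem IsqLinearized.sub {q : ℕ} {f g : L[X]} (hf : IsqLinearized q f)
    (hg : IsqLinearized q g) : IsqLinearized q (f - g) := by
  rw [isqLinearized_iff_mem_linearizedPolynomials] at *
  exact sub_mem hf hg

theorem IsqLinearized.C_mul {q : ℕ} {f : L[X]} (hf : IsqLinearized q f) (a : L) :
    IsqLinearized q (C a * f) := by
  rw [isqLinearized_iff_mem_linearizedPolynomials, ← smul_eq_C_mul] at *
  exact smul_mem _ a hf

def IsLinearizedAnnihilator (q : ℕ) (W : Set L) (t : ℕ) (D : L[X]) : Prop :=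
  D.Monic ∧ IsqLinearized q D ∧ D.natDegree = q ^ t ∧ ∀ v ∈ W, D.eval v = 0

end Linearized

section FiniteField

variable {F L : Type*} [Field F] [Fintype F] [Field L] [Algebra F L]

local notation "q" => Fintype.card F

theorem frobeniusAlgHom_pow_apply (R : Type*) [CommRing R] [Algebra F R] (j : ℕ) (x : R) :
    (FiniteField.frobeniusAlgHom F R ^ j) x = x ^ q ^ j := by
  simp [AlgHom.coe_pow, FiniteField.coe_frobeniusAlgHom, pow_iterate]

theorem pow_card_eq_mul_of_mem_span_singleton {R : Type*} [CommRing R] [Algebra F R] {u y : R}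
    (hy : y ∈ F ∙ u) : y ^ q = u ^ (q - 1) * y := by
  obtain ⟨a, rfl⟩ := mem_span_singleton.mp hy
  rw [_root_.smul_pow, FiniteField.pow_card, mul_smul_comm, ← pow_succ,
    Nat.sub_add_cancel Fintype.card_pos]

variable (F) in
theorem IsqLinearized.exists_linearMap_eq_eval {f : L[X]} (hf : IsqLinearized q f) :
    ∃ φ : L →ₗ[F] L, ∀ x, φ x = f.eval x := by
  rw [isqLinearized_iff_mem_linearizedPolynomials] at hf
  induction hf using span_induction with
  | mem g hg =>
    obtain ⟨j, rfl⟩ := hg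
    exact ⟨(FiniteField.frobeniusAlgHom F L ^ j).toLinearMap, fun x => by
      simp [frobeniusAlgHom_pow_apply]⟩
  | zero => exact ⟨0, fun x => by simp⟩
  | add g h _ _ hg hh =>
    obtain ⟨φ, hφ⟩ := hg
    obtain ⟨ψ, hψ⟩ := hh
    exact ⟨φ + ψ, fun x => by simp [hφ, hψ]⟩
  | smul a g _ hg =>
    obtain ⟨φ, hφ⟩ := hg
    exact ⟨(LinearMap.mulLeft F a).comp φ, fun x => by simp [hφ]⟩

theorem IsqLinearized.pow_card_pow {f : L[X]} (hf : IsqLinearized q f) (u : ℕ) :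
    IsqLinearized q (f ^ q ^ u) := by
  rw [isqLinearized_iff_mem_linearizedPolynomials] at *
  induction hf using span_induction with
  | mem g hg =>
    obtain ⟨j, rfl⟩ := hg
    rw [← pow_mul, ← pow_add]
    exact subset_span ⟨j + u, rfl⟩
  | zero => simp [zero_pow (pow_ne_zero u Fintype.card_ne_zero)]
  | add g h _ _ hg hh =>
    rw [← frobeniusAlgHom_pow_apply, map_add, frobeniusAlgHom_pow_apply,
      frobeniusAlgHom_pow_apply]
    exact add_mem hg hh
  | smul a g _ hg =>
    rw [_root_.smul_pow]
    exact smul_mem _ _ hg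

theorem IsqLinearized.forall_eval_eq_iff {f : L[X]} (hf : IsqLinearized q f) {ι : Type*}
    (r c : ι → L) : (∀ i, f.eval (r i) = f.eval (c i)) ↔
      ∀ v ∈ span F (Set.range fun i => c i - r i), f.eval v = 0 := by
  obtain ⟨φ, hφ⟩ := hf.exists_linearMap_eq_eval F
  simp_rw [← hφ, ← LinearMap.mem_ker, ← SetLike.le_def, span_le, Set.range_subset_iff,
    SetLike.mem_coe, LinearMap.mem_ker, map_sub, sub_eq_zero, eq_comm]

variable (F) in
theorem exists_isLinearizedAnnihilator_span {d : ℕ} (b : Fin d → L) :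
    ∃ D : L[X], IsLinearizedAnnihilator q (span F (Set.range b)) d D := by
  induction d with
  | zero =>
    refine ⟨X, monic_X, fun i hi => ⟨0, ?_⟩, by simp, fun v hv => ?_⟩
    · simpa [coeff_X, eq_comm] using hi
    · simp_all
  | succ d ih =>
    obtain ⟨D, hmonic, hlin, hdeg, hvan⟩ := ih (Fin.tail b)
    obtain ⟨φ, hφ⟩ := hlin.exists_linearMap_eq_eval F
    set u := D.eval (b 0)
    have hlt : (C (u ^ (q - 1)) * D).natDegree < (D ^ q).natDegree := by
      rw [natDegree_pow]
      exact (natDegree_C_mul_le _ _).trans_lt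
        (lt_mul_left (hdeg ▸ pow_pos Fintype.card_pos d) Fintype.one_lt_card)
    have hlin_pow : IsqLinearized q (D ^ q) := by simpa using hlin.pow_card_pow 1
    refine ⟨D ^ q - C (u ^ (q - 1)) * D, (hmonic.pow q).sub_of_left (degree_lt_degree hlt),
      hlin_pow.sub (hlin.C_mul _), ?_, fun v hv => ?_⟩
    · rw [natDegree_sub_eq_left_of_natDegree_lt hlt, natDegree_pow, hdeg, pow_succ']
    · rw [SetLike.mem_coe, ← Fin.cons_self_tail b, Fin.range_cons, span_insert, mem_sup] at hv
      obtain ⟨y, hy, z, hz, rfl⟩ := hv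
      obtain ⟨a, rfl⟩ := mem_span_singleton.mp hy
      have hDv : D.eval (a • b 0 + z) ∈ F ∙ u := by
        rw [← hφ, map_add, map_smul, hφ, hφ, hvan z hz, add_zero]
        exact smul_mem _ a (mem_span_singleton_self u)
      rw [eval_sub, eval_pow, eval_mul, eval_C, pow_card_eq_mul_of_mem_span_singleton hDv, sub_self]

theorem exists_isLinearizedAnnihilator_finrank (W : Submodule F L) [FiniteDimensional F W] :
    ∃ D : L[X], IsLinearizedAnnihilator q W (finrank F W) D := by
  set b := Module.finBasis F W
  obtain ⟨D, hD⟩ := exists_isLinearizedAnnihilator_span F (W.subtype ∘ b)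
  rw [Set.range_comp, ← map_span, b.span_eq, Submodule.map_top, range_subtype] at hD
  exact ⟨D, hD⟩

theorem pow_finrank_le_natDegree_of_forall_eval_eq_zero {W : Submodule F L}
    [FiniteDimensional F W] {P : L[X]} (hP : P ≠ 0) (hvan : ∀ v ∈ W, P.eval v = 0) :
    q ^ finrank F W ≤ P.natDegree := by
  have : Finite W := Module.finite_of_finite F
  have : Fintype W := Fintype.ofFinite W
  by_contra! hlt
  rw [← card_eq_pow_finrank] at hlt
  exact hP (eq_zero_of_natDegree_lt_card_of_eval_eq_zero P Subtype.val_injective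
    (fun v => hvan v v.2) hlt)

theorem IsLinearizedAnnihilator.finrank_le {W : Submodule F L} [FiniteDimensional F W]
    {t : ℕ} {D : L[X]} (hD : IsLinearizedAnnihilator q W t D) : finrank F W ≤ t := by
  have hle := pow_finrank_le_natDegree_of_forall_eval_eq_zero hD.1.ne_zero hD.2.2.2
  rwa [hD.2.2.1, Nat.pow_le_pow_iff_right Fintype.one_lt_card] at hle

theorem IsLinearizedAnnihilator.eq {W : Submodule F L} [FiniteDimensional F W] {D₁ D₂ : L[X]}
    (h₁ : IsLinearizedAnnihilator q W (finrank F W) D₁)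
    (h₂ : IsLinearizedAnnihilator q W (finrank F W) D₂) : D₁ = D₂ := by
  obtain ⟨hmonic₁, -, hdeg₁, hvan₁⟩ := h₁
  obtain ⟨hmonic₂, -, hdeg₂, hvan₂⟩ := h₂
  by_contra hne
  have hlt : (D₁ - D₂).natDegree < D₁.natDegree :=
    natDegree_lt_natDegree (sub_ne_zero.mpr hne) <| degree_sub_lt_left
      (by rw [degree_eq_natDegree hmonic₁.ne_zero, degree_eq_natDegree hmonic₂.ne_zero, hdeg₁,
        hdeg₂])
      hmonic₁.ne_zero (by rw [hmonic₁.leadingCoeff, hmonic₂.leadingCoeff])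
  have hle := pow_finrank_le_natDegree_of_forall_eval_eq_zero (sub_ne_zero.mpr hne)
    fun v hv => by rw [eval_sub, hvan₁ v hv, hvan₂ v hv, sub_self]
  omega

theorem exists_ne_isLinearizedAnnihilator {W : Submodule F L} [FiniteDimensional F W] {t : ℕ}
    (ht : finrank F W < t) :
    ∃ D₁ D₂ : L[X], D₁ ≠ D₂ ∧ IsLinearizedAnnihilator q W t D₁ ∧
      IsLinearizedAnnihilator q W t D₂ := by
  obtain ⟨D, hmonic, hlin, hdeg, hvan⟩ := exists_isLinearizedAnnihilator_finrank W
  obtain ⟨k, rfl⟩ := Nat.exists_eq_add_of_lt ht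
  have hdeg_pow : (D ^ q ^ (k + 1)).natDegree = q ^ (finrank F W + k + 1) := by
    rw [natDegree_pow, hdeg, ← pow_add, add_comm, add_assoc]
  have hlt : D.natDegree < (D ^ q ^ (k + 1)).natDegree := by
    rw [hdeg_pow, hdeg]
    exact Nat.pow_lt_pow_right Fintype.one_lt_card (by omega)
  have hvan_pow : ∀ v ∈ (W : Set L), (D ^ q ^ (k + 1)).eval v = 0 := fun v hv => by
    rw [eval_pow, hvan v hv, zero_pow (pow_ne_zero _ Fintype.card_ne_zero)]
  refine ⟨D ^ q ^ (k + 1), D ^ q ^ (k + 1) - D, fun h => hmonic.ne_zero (sub_eq_self.mp h.symm),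
    ⟨hmonic.pow _, hlin.pow_card_pow _, hdeg_pow, hvan_pow⟩,
    ⟨(hmonic.pow _).sub_of_left (degree_lt_degree hlt), (hlin.pow_card_pow _).sub hlin,
      by rw [natDegree_sub_eq_left_of_natDegree_lt hlt, hdeg_pow], fun v hv => ?_⟩⟩
  rw [eval_sub, hvan_pow v hv, hvan v hv, sub_zero]

theorem finrank_eq_iff_existsUnique_isLinearizedAnnihilator (W : Submodule F L)
    [FiniteDimensional F W] (t : ℕ) :
    finrank F W = t ↔ ∃! D : L[X], IsLinearizedAnnihilator q W t D := by
  constructor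
  · rintro rfl
    obtain ⟨D, hD⟩ := exists_isLinearizedAnnihilator_finrank W
    exact ⟨D, hD, fun D' hD' => hD'.eq hD⟩
  · rintro ⟨D, hD, huniq⟩
    refine hD.finrank_le.antisymm (not_lt.mp fun hlt => ?_)
    obtain ⟨D₁, D₂, hne, h₁, h₂⟩ := exists_ne_isLinearizedAnnihilator hlt
    exact hne ((huniq D₁ h₁).trans (huniq D₂ h₂).symm)

end FiniteField

theorem rank_distance_iff_unique_error_span_polynomial_general
    (q : ℕ) (F L : Type*) [Field F] [Field L] [Fintype F] [Algebra F L]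
    (hcardF : Fintype.card F = q) (n : ℕ) (r : Fin n → L) (c : Fin n → L) (t : ℕ) :
    Module.finrank F (Submodule.span F (Set.range fun i => c i - r i)) = t ↔
      ∃! D : L[X], D.Monic ∧ IsqLinearized q D ∧ D.natDegree = q ^ t ∧
        ∀ i, D.eval (r i) = D.eval (c i) := by
  subst hcardF
  have : FiniteDimensional F (span F (Set.range fun i => c i - r i)) :=
    FiniteDimensional.span_of_finite F (Set.finite_range _)
  rw [finrank_eq_iff_existsUnique_isLinearizedAnnihilator]
  refine existsUnique_congr fun D => ?_
  refine and_congr_right fun _ => and_congr_right fun hlin => and_congr_right fun _ => ?_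
  exact (hlin.forall_eval_eq_iff r c).symm

/-- The codeword `c = (f(g₁), …, f(gₙ))` has rank distance `t` to `r` if and only if
there exists exactly one monic `q`-linearized polynomial `D` of `q`-degree `t` with
`D(rᵢ) = D(cᵢ)` for all `i`. -/
theorem rank_distance_iff_unique_error_span_polynomial
    (q m : ℕ) (hq : IsPrimePow q) (hm : 0 < m)
    (F L : Type*) [Field F] [Field L] [Fintype F] [Fintype L] [Algebra F L]
    (hcardF : Fintype.card F = q) (hcardL : Fintype.card L = q ^ m)
    (n k : ℕ) (g : Fin n → L) (hg : LinearIndependent F g) (r : Fin n → L)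
    (f : L[X]) (hf : IsqLinearized q f) (hfd : f.natDegree < q ^ k)
    (c : Fin n → L) (hc : ∀ i, c i = f.eval (g i)) (t : ℕ) :
    Module.finrank F (Submodule.span F (Set.range fun i => c i - r i)) = t ↔
      ∃! D : L[X], D.Monic ∧ IsqLinearized q D ∧ D.natDegree = q ^ t ∧
        ∀ i, D.eval (r i) = D.eval (c i) :=
  rank_distance_iff_unique_error_span_polynomial_general q F L hcardF n r c t
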